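/- Let p ≥ 2 be an integer. Assume there exist nonzero real numbers a_1 = 1, a_2, …, a_p such that ⟨E_{M1⋯Mk} | F^{N1⋯Nk}⟩ = a_k (ℙ_k)_{M1⋯Mk}^{N1⋯Nk} for k = 2, …, p. For 1 ≤ k ≤ p define 𝚈^{N1⋯Nk}_{M1⋯M(k+1)} = (1/a_k) ⟦F^{N1⋯Nk}, E_{M1⋯M(k+1)}⟧ ∈ U_{−1} and 𝚇_{M|N1⋯Nk}^{P1⋯Pk} = (1/a_k) ⟦E_M, ⟦E_{N1⋯Nk}, F^{P1⋯Pk}⟧⟧ ∈ U_{−1}. Then for all indices N1, …, Np, M1, …, M(p+1): 𝚈^{N1⋯Np}_{M1⋯M(p+1)} = − Σ_{Q1,…,Qp} (ℙ_p)_{Q1⋯Qp}^{N1⋯Np} δ_{M1}^{Q1} 𝚈^{Q2⋯Qp}_{M2⋯M(p+1)} − 𝚇_{M1|M2⋯M(p+1)}^{N1⋯Np}, an identity in U_{−1}. -/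

import Mathlib

/-!
By the Jacobi identity, `⟦F^N, ⟦E_{M1}, E_{M2⋯}⟧⟧ = ⟦⟦F^N, E_{M1}⟧, E_{M2⋯}⟧ - ⟦E_{M1}, ⟦E_{M2⋯}, F^N⟧⟧`,
whose second term is `-a_p 𝚇`. The bracket `⟦F^N, E_{M1}⟧` lies in `U_{p-1}`, which is spanned by the
`F^Q`; there an element is determined by its pairings with the `E_A`, because
`⟨E_A|F^B⟩ = a_{p-1} ℙ_{p-1}` with `a_{p-1} ≠ 0` and `ℙ_{p-1}` fixes the `F^B`. Invariance of the form
gives `⟨E_A|⟦F^N, E_{M1}⟧⟩ = -a_p (ℙ_p)_{M1 A}^N`, and since `ℙ_{p-1}` is absorbed into `ℙ_p`, this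
identifies `⟦F^N, E_{M1}⟧ = -(a_p / a_{p-1}) Σ_Q (ℙ_p)_{M1 Q}^N F^Q`.
-/

/-- Nested bracket `⟦f M1, ⟦f M2, …, ⟦f M(k-1), f Mk⟧⋯⟧⟧` of a family `f : ι → V`
along a tuple of `k` indices (junk value `0` for `k = 0`). -/
def nest {V : Type} [AddCommGroup V] [Module ℝ V] {ι : Type}
    (bb : V →ₗ[ℝ] V →ₗ[ℝ] V) (f : ι → V) : (k : ℕ) → (Fin k → ι) → V
  | 0, _ => 0
  | 1, M => f (M 0)
  | (k + 2), M => bb (f (M 0)) (nest bb f (k + 1) (fun i => M i.succ))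

open Finset

section Nest

variable {V ι : Type} [AddCommGroup V] [Module ℝ V] (bb : V →ₗ[ℝ] V →ₗ[ℝ] V) (f : ι → V)

lemma nest_cons (m : ℕ) (i : ι) (A : Fin (m + 1) → ι) :
    nest bb f (m + 2) (Fin.cons i A) = bb (f i) (nest bb f (m + 1) A) := rfl

lemma nest_mem (U : ℤ → Submodule ℝ V)
    (hgrade : ∀ (p q : ℤ) (x y : V), x ∈ U p → y ∈ U q → bb x y ∈ U (p + q))
    {d : ℤ} (hf : ∀ i, f i ∈ U d) (m : ℕ) (A : Fin (m + 1) → ι) :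
    nest bb f (m + 1) A ∈ U (((m : ℤ) + 1) * d) := by
  induction m with
  | zero => simpa [nest] using hf (A 0)
  | succ m ih =>
    rw [show (((m + 1 : ℕ) : ℤ) + 1) * d = d + ((m : ℤ) + 1) * d by push_cast; ring]
    exact hgrade _ _ _ _ (hf (A 0)) (ih (Fin.tail A))

end Nest

lemma sum_ite_head_eq {ι W : Type} [Fintype ι] [DecidableEq ι] [AddCommMonoid W] {n : ℕ}
    (i : ι) (g : (Fin (n + 1) → ι) → W) :
    ∑ Q : Fin (n + 1) → ι, (if i = Q 0 then g Q else 0) = ∑ Q : Fin n → ι, g (Fin.cons i Q) := by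
  rw [← (Fin.consEquiv fun _ => ι).sum_comp, Fintype.sum_prod_type]
  simp [Fin.consEquiv]

lemma sum_fin_one_delta_smul {ι W : Type} [Fintype ι] [DecidableEq ι] [AddCommMonoid W]
    [Module ℝ W] (g : (Fin 1 → ι) → W) (A : Fin 1 → ι) :
    ∑ Q : Fin 1 → ι, (if Q 0 = A 0 then (1 : ℝ) else 0) • g Q = g A := by
  rw [Fintype.sum_eq_single A fun Q hQ => by
    rw [if_neg fun h => hQ (funext fun j => by rw [Fin.fin_one_eq_zero j, h]), zero_smul]]
  simp

lemma sum_mul_cons_eq_of_idem {ι : Type} [Fintype ι] {n : ℕ}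
    (P : (Fin n → ι) → (Fin n → ι) → ℝ) (P' : (Fin (n + 1) → ι) → (Fin (n + 1) → ι) → ℝ)
    (hidem : ∀ A C, ∑ Q, P A Q * P Q C = P A C)
    (hP' : ∀ M N, P' M N = ∑ A, ∑ B,
      P (Fin.tail M) A * P' (Fin.cons (M 0) A) (Fin.cons (N 0) B) * P B (Fin.tail N))
    (i : ι) (A : Fin n → ι) (N : Fin (n + 1) → ι) :
    ∑ Q, P A Q * P' (Fin.cons i Q) N = P' (Fin.cons i A) N := by
  simp only [hP' (Fin.cons i _) N, Fin.tail_cons, Fin.cons_zero, mul_sum]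
  rw [sum_comm]
  refine sum_congr rfl fun C _ => ?_
  rw [sum_comm]
  refine sum_congr rfl fun D _ => ?_
  rw [← hidem A C, sum_mul, sum_mul]
  exact sum_congr rfl fun Q _ => by ring

lemma eq_zero_of_forall_form_eq_zero {V κ : Type} [AddCommGroup V] [Module ℝ V] [Fintype κ]
    (form : V →ₗ[ℝ] V →ₗ[ℝ] ℝ) (e f : κ → V) (P : κ → κ → ℝ) {c : ℝ} (hc : c ≠ 0)
    (hform : ∀ A B, form (e A) (f B) = c * P A B) (hf : ∀ B, f B = ∑ A, P A B • f A)
    {x : V} (hx : x ∈ Submodule.span ℝ (Set.range f)) (h0 : ∀ A, form (e A) x = 0) : x = 0 := by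
  obtain ⟨w, rfl⟩ := (Submodule.mem_span_range_iff_exists_fun ℝ).mp hx
  have hPw : ∀ A, ∑ B, P A B * w B = 0 := fun A => by
    have h := h0 A
    simp only [map_sum, map_smul, hform, smul_eq_mul] at h
    refine (mul_eq_zero.mp ?_).resolve_left hc
    rw [mul_sum, ← h]
    exact sum_congr rfl fun B _ => by ring
  calc ∑ B, w B • f B = ∑ B, w B • ∑ A, P A B • f A := sum_congr rfl fun B _ => by rw [← hf]
    _ = ∑ A, (∑ B, P A B * w B) • f A := by
      simp only [smul_sum, smul_smul, sum_smul]
      rw [sum_comm]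
      exact sum_congr rfl fun A _ => sum_congr rfl fun B _ => by rw [mul_comm]
    _ = 0 := by simp [hPw]

section LevelOne

/- `ℙ_1` is the identity, so the hypotheses stated for levels `m ≥ 2` also hold at level `1`. -/

variable {ι : Type} [DecidableEq ι] {P : (m : ℕ) → (Fin m → ι) → (Fin m → ι) → ℝ}
  {top m : ℕ}

lemma proj_idem_of_le [Fintype ι]
    (hP1 : ∀ M N : Fin 1 → ι, P 1 M N = if M 0 = N 0 then (1 : ℝ) else 0)
    (hPidem : ∀ m, 2 ≤ m → m ≤ top → ∀ M N : Fin m → ι,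
      ∑ Q : Fin m → ι, P m M Q * P m Q N = P m M N)
    (hm : m + 1 ≤ top) (A C : Fin (m + 1) → ι) :
    ∑ Q, P (m + 1) A Q * P (m + 1) Q C = P (m + 1) A C := by
  rcases m with _ | m
  · simp only [hP1, mul_comm (ite (A 0 = _) _ _), ← smul_eq_mul]
    exact sum_fin_one_delta_smul (fun Q => if A 0 = Q 0 then (1 : ℝ) else 0) C
  · exact hPidem _ (by omega) hm A C

lemma nest_eq_sum_proj_of_le [Fintype ι] {V : Type} [AddCommGroup V] [Module ℝ V]
    (bb : V →ₗ[ℝ] V →ₗ[ℝ] V) (F : ι → V)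
    (hP1 : ∀ M N : Fin 1 → ι, P 1 M N = if M 0 = N 0 then (1 : ℝ) else 0)
    (hPF : ∀ m, 2 ≤ m → m ≤ top → ∀ N : Fin m → ι,
      nest bb F m N = ∑ M : Fin m → ι, P m M N • nest bb F m M)
    (hm : m + 1 ≤ top) (B : Fin (m + 1) → ι) :
    nest bb F (m + 1) B = ∑ A, P (m + 1) A B • nest bb F (m + 1) A := by
  rcases m with _ | m
  · simp only [hP1]
    exact (sum_fin_one_delta_smul _ B).symm
  · exact hPF _ (by omega) hm B

lemma form_nest_eq_of_le {V : Type} [AddCommGroup V] [Module ℝ V]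
    (bb : V →ₗ[ℝ] V →ₗ[ℝ] V) (form : V →ₗ[ℝ] V →ₗ[ℝ] ℝ) (E F : ι → V) {a : ℕ → ℝ}
    (hEF : ∀ M N, form (E M) (F N) = if M = N then (1 : ℝ) else 0) (ha1 : a 1 = 1)
    (hP1 : ∀ M N : Fin 1 → ι, P 1 M N = if M 0 = N 0 then (1 : ℝ) else 0)
    (haP : ∀ m, 2 ≤ m → m ≤ top → ∀ M N : Fin m → ι,
      form (nest bb E m M) (nest bb F m N) = a m * P m M N)
    (hm : m + 1 ≤ top) (A B : Fin (m + 1) → ι) :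
    form (nest bb E (m + 1) A) (nest bb F (m + 1) B) = a (m + 1) * P (m + 1) A B := by
  rcases m with _ | m
  · rw [ha1, one_mul, hP1]; exact hEF (A 0) (B 0)
  · exact haP _ (by omega) hm A B

end LevelOne

section Graded

variable {V : Type} [AddCommGroup V] [Module ℝ V] (U : ℤ → Submodule ℝ V)
  (bb : V →ₗ[ℝ] V →ₗ[ℝ] V)

lemma bracket_bracket_eq_of_mem
    (hanti : ∀ (p q : ℤ) (x y : V), x ∈ U p → y ∈ U q →
      bb x y = (-((-1 : ℝ) ^ (p * q))) • bb y x)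
    (hjac : ∀ (p q : ℤ) (x y z : V), x ∈ U p → y ∈ U q →
      bb (bb x y) z = bb x (bb y z) - ((-1 : ℝ) ^ (p * q)) • bb y (bb x z))
    {p : ℤ} {x y z : V} (hx : x ∈ U p) (hy : y ∈ U (-1)) (hz : z ∈ U (-p)) :
    bb x (bb y z) = bb (bb x y) z - bb y (bb z x) := by
  have hsign : (-1 : ℝ) ^ (p * -1) * -(-1 : ℝ) ^ (p * -p) = -1 := by
    have heven : Even (p * -1 + p * -p) := by
      rw [show p * -1 + p * -p = -(p * (p + 1)) by ring]
      exact (Int.even_mul_succ_self p).neg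
    rw [mul_neg, ← zpow_add₀ (by norm_num), heven.neg_one_zpow]
  rw [hjac p (-1) x y z hx hy, hanti p (-p) x z hx hz, map_smul, smul_smul, hsign]
  module

lemma form_bracket_eq_neg_of_mem (form : V →ₗ[ℝ] V →ₗ[ℝ] ℝ)
    (hanti : ∀ (p q : ℤ) (x y : V), x ∈ U p → y ∈ U q →
      bb x y = (-((-1 : ℝ) ^ (p * q))) • bb y x)
    (hforminv : ∀ x y z : V, form (bb x y) z = form x (bb y z))
    {p : ℤ} {x y w : V} (hx : x ∈ U p) (hy : y ∈ U (-1)) (hw : w ∈ U (1 - p)) :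
    form w (bb x y) = -form (bb y w) x := by
  have hsign : -(-1 : ℝ) ^ (p * -1) * -(-1 : ℝ) ^ ((1 - p) * -1) = -1 := by
    rw [neg_mul_neg, ← zpow_add₀ (by norm_num)]
    rw [show p * -1 + (1 - p) * -1 = -1 by ring]
    norm_num
  rw [hanti p (-1) x y hx hy, map_smul, smul_eq_mul, ← hforminv,
    hanti (1 - p) (-1) w y hw hy, map_smul, LinearMap.smul_apply, smul_eq_mul, ← mul_assoc, hsign,
    neg_one_mul]

end Graded

theorem bracket_nest_eq_neg_smul_sum {V ι : Type} [AddCommGroup V] [Module ℝ V] [Fintype ι]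
    (U : ℤ → Submodule ℝ V) (bb : V →ₗ[ℝ] V →ₗ[ℝ] V) (form : V →ₗ[ℝ] V →ₗ[ℝ] ℝ)
    (hgrade : ∀ (p q : ℤ) (x y : V), x ∈ U p → y ∈ U q → bb x y ∈ U (p + q))
    (hanti : ∀ (p q : ℤ) (x y : V), x ∈ U p → y ∈ U q →
      bb x y = (-((-1 : ℝ) ^ (p * q))) • bb y x)
    (hforminv : ∀ x y z : V, form (bb x y) z = form x (bb y z))
    (E F : ι → V) (hE : ∀ M, E M ∈ U (-1)) (hF : ∀ M, F M ∈ U 1) {n : ℕ}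
    (hspan : U ((n : ℤ) + 1) ≤ Submodule.span ℝ (Set.range (nest bb F (n + 1))))
    (P : (Fin (n + 1) → ι) → (Fin (n + 1) → ι) → ℝ)
    (P' : (Fin (n + 2) → ι) → (Fin (n + 2) → ι) → ℝ)
    (hidem : ∀ A C, ∑ Q, P A Q * P Q C = P A C)
    (hP' : ∀ M N, P' M N = ∑ A, ∑ B,
      P (Fin.tail M) A * P' (Fin.cons (M 0) A) (Fin.cons (N 0) B) * P B (Fin.tail N))
    (hPF : ∀ B, nest bb F (n + 1) B = ∑ A, P A B • nest bb F (n + 1) A)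
    {c c' : ℝ} (hc : c ≠ 0)
    (hform : ∀ A B, form (nest bb E (n + 1) A) (nest bb F (n + 1) B) = c * P A B)
    (hform' : ∀ A B, form (nest bb E (n + 2) A) (nest bb F (n + 2) B) = c' * P' A B)
    (N : Fin (n + 2) → ι) (i : ι) :
    bb (nest bb F (n + 2) N) (E i)
      = -(c' / c) • ∑ Q, P' (Fin.cons i Q) N • nest bb F (n + 1) Q := by
  have hFN : nest bb F (n + 2) N ∈ U ((n : ℤ) + 2) := by
    convert nest_mem bb F U hgrade hF (n + 1) N using 2; push_cast; ring
  have hFNE : bb (nest bb F (n + 2) N) (E i) ∈ U ((n : ℤ) + 1) := by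
    convert hgrade _ _ _ _ hFN (hE i) using 2; ring
  rw [← sub_eq_zero]
  refine eq_zero_of_forall_form_eq_zero form (nest bb E (n + 1)) (nest bb F (n + 1)) P hc hform hPF
    (Submodule.sub_mem _ (hspan hFNE) (Submodule.smul_mem _ _ (Submodule.sum_mem _ fun Q _ =>
      Submodule.smul_mem _ _ (Submodule.subset_span ⟨Q, rfl⟩)))) fun A => ?_
  have hEA : nest bb E (n + 1) A ∈ U (1 - ((n : ℤ) + 2)) := by
    convert nest_mem bb E U hgrade hE n A using 2; ring
  rw [map_sub, sub_eq_zero, form_bracket_eq_neg_of_mem U bb form hanti hforminv hFN (hE i) hEA,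
    ← nest_cons, hform', map_smul, map_sum, ← sum_mul_cons_eq_of_idem P P' hidem hP' i A N,
    mul_sum, smul_eq_mul, mul_sum, ← sum_neg_distrib]
  refine sum_congr rfl fun Q _ => ?_
  rw [map_smul, hform, smul_eq_mul]
  field_simp

theorem Y_recursion_general
    {V : Type} [AddCommGroup V] [Module ℝ V]
    (U : ℤ → Submodule ℝ V)
    (bb : V →ₗ[ℝ] V →ₗ[ℝ] V)
    (form : V →ₗ[ℝ] V →ₗ[ℝ] ℝ)
    (hgrade : ∀ (p q : ℤ) (x y : V), x ∈ U p → y ∈ U q → bb x y ∈ U (p + q))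
    (hanti : ∀ (p q : ℤ) (x y : V), x ∈ U p → y ∈ U q →
      bb x y = (-((-1 : ℝ) ^ (p * q))) • bb y x)
    (hjac : ∀ (p q : ℤ) (x y z : V), x ∈ U p → y ∈ U q →
      bb (bb x y) z = bb x (bb y z) - ((-1 : ℝ) ^ (p * q)) • bb y (bb x z))
    (hforminv : ∀ x y z : V, form (bb x y) z = form x (bb y z))
    {ι : Type} [Fintype ι] [DecidableEq ι]
    (E F : ι → V)
    (hE : ∀ M, E M ∈ U (-1))
    (hF : ∀ M, F M ∈ U 1)
    (hEF : ∀ M N, form (E M) (F N) = if M = N then (1 : ℝ) else 0)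
    (hspanF : ∀ m : ℕ, 1 ≤ m → U (m : ℤ) ≤ Submodule.span ℝ (Set.range (nest bb F m)))
    (k : ℕ)
    (P : (m : ℕ) → (Fin m → ι) → (Fin m → ι) → ℝ)
    (hP1 : ∀ M N : Fin 1 → ι, P 1 M N = if M 0 = N 0 then (1 : ℝ) else 0)
    (hPidem : ∀ m, 2 ≤ m → m ≤ k + 2 → ∀ M N : Fin m → ι,
      ∑ Q : Fin m → ι, P m M Q * P m Q N = P m M N)
    (hPF : ∀ m, 2 ≤ m → m ≤ k + 2 → ∀ N : Fin m → ι,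
      nest bb F m N = ∑ M : Fin m → ι, P m M N • nest bb F m M)
    (hPnest : ∀ m : ℕ, 2 ≤ m + 1 → m + 1 ≤ k + 2 → ∀ M N : Fin (m + 1) → ι,
      P (m + 1) M N = ∑ A : Fin m → ι, ∑ B : Fin m → ι,
        P m (Fin.tail M) A * P (m + 1) (Fin.cons (M 0) A) (Fin.cons (N 0) B) *
          P m B (Fin.tail N))
    (a : ℕ → ℝ)
    (ha1 : a 1 = 1)
    (hane : ∀ m, 1 ≤ m → m ≤ k + 2 → a m ≠ 0)
    (haP : ∀ m, 2 ≤ m → m ≤ k + 2 → ∀ M N : Fin m → ι,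
      form (nest bb E m M) (nest bb F m N) = a m * P m M N) :
    ∀ (N : Fin (k + 2) → ι) (M : Fin (k + 3) → ι),
      (a (k + 2))⁻¹ • bb (nest bb F (k + 2) N) (nest bb E (k + 3) M)
        = -(∑ Q : Fin (k + 2) → ι, P (k + 2) Q N •
              ((if M 0 = Q 0 then (1 : ℝ) else 0) •
                ((a (k + 1))⁻¹ •
                  bb (nest bb F (k + 1) (Fin.tail Q)) (nest bb E (k + 2) (Fin.tail M)))))
          - (a (k + 2))⁻¹ •
              bb (E (M 0)) (bb (nest bb E (k + 2) (Fin.tail M)) (nest bb F (k + 2) N)) := by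
  intro N M
  have hFN : nest bb F (k + 2) N ∈ U ((k : ℤ) + 2) := by
    convert nest_mem bb F U hgrade hF (k + 1) N using 2; push_cast; ring
  have hET : nest bb E (k + 2) (Fin.tail M) ∈ U (-((k : ℤ) + 2)) := by
    convert nest_mem bb E U hgrade hE (k + 1) (Fin.tail M) using 2; push_cast; ring
  have hbracket := bracket_nest_eq_neg_smul_sum U bb form hgrade hanti hforminv E F hE hF
    (by exact_mod_cast hspanF (k + 1) (by omega)) (P (k + 1)) (P (k + 2))
    (proj_idem_of_le hP1 hPidem (by omega)) (hPnest (k + 1) (by omega) (by omega))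
    (nest_eq_sum_proj_of_le bb F hP1 hPF (by omega)) (hane (k + 1) (by omega) (by omega))
    (form_nest_eq_of_le bb form E F hEF ha1 hP1 haP (by omega)) (haP (k + 2) (by omega) le_rfl)
    N (M 0)
  rw [show nest bb E (k + 3) M = bb (E (M 0)) (nest bb E (k + 2) (Fin.tail M)) from rfl,
    bracket_bracket_eq_of_mem U bb hanti hjac hFN (hE _) hET, hbracket]
  simp only [smul_ite, ite_smul, one_smul, zero_smul, smul_zero]
  rw [sum_ite_head_eq]
  simp only [Fin.tail_cons, map_smul, map_sum, LinearMap.smul_apply, LinearMap.sum_apply, smul_sub,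
    smul_sum, smul_smul]
  have ha2 := hane (k + 2) (by omega) le_rfl
  rw [← sum_neg_distrib]
  congr 1
  refine sum_congr rfl fun Q _ => ?_
  rw [← neg_smul]
  congr 1
  field_simp

/-- With `𝚈^{N1⋯Nk}_{M1⋯M(k+1)} = (1/a_k) ⟦F^{N1⋯Nk}, E_{M1⋯M(k+1)}⟧` and
`𝚇_{M|N1⋯Nk}^{P1⋯Pk} = (1/a_k) ⟦E_M, ⟦E_{N1⋯Nk}, F^{P1⋯Pk}⟧⟧` (and `p = k + 2 ≥ 2`):
`𝚈^{N1⋯Np}_{M1⋯M(p+1)} = − Σ_Q (ℙ_p)_{Q1⋯Qp}{}^{N1⋯Np} δ_{M1}^{Q1} 𝚈^{Q2⋯Qp}_{M2⋯M(p+1)}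
− 𝚇_{M1|M2⋯M(p+1)}^{N1⋯Np}`. -/
theorem Y_recursion
    {V : Type} [AddCommGroup V] [Module ℝ V]
    (U : ℤ → Submodule ℝ V)
    (bb : V →ₗ[ℝ] V →ₗ[ℝ] V)
    (form : V →ₗ[ℝ] V →ₗ[ℝ] ℝ)
    (hgrade : ∀ (p q : ℤ) (x y : V), x ∈ U p → y ∈ U q → bb x y ∈ U (p + q))
    (hanti : ∀ (p q : ℤ) (x y : V), x ∈ U p → y ∈ U q →
      bb x y = (-((-1 : ℝ) ^ (p * q))) • bb y x)
    (hjac : ∀ (p q : ℤ) (x y z : V), x ∈ U p → y ∈ U q →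
      bb (bb x y) z = bb x (bb y z) - ((-1 : ℝ) ^ (p * q)) • bb y (bb x z))
    (hform0 : ∀ (p q : ℤ) (x y : V), x ∈ U p → y ∈ U q → p + q ≠ 0 → form x y = 0)
    (hforminv : ∀ x y z : V, form (bb x y) z = form x (bb y z))
    {ι : Type} [Fintype ι] [DecidableEq ι]
    (E F : ι → V)
    (hE : ∀ M, E M ∈ U (-1))
    (hF : ∀ M, F M ∈ U 1)
    (hEF : ∀ M N, form (E M) (F N) = if M = N then (1 : ℝ) else 0)
    (hspanE : ∀ m : ℕ, 1 ≤ m → U (-(m : ℤ)) ≤ Submodule.span ℝ (Set.range (nest bb E m)))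
    (hspanF : ∀ m : ℕ, 1 ≤ m → U (m : ℤ) ≤ Submodule.span ℝ (Set.range (nest bb F m)))
    (k : ℕ)
    (P : (m : ℕ) → (Fin m → ι) → (Fin m → ι) → ℝ)
    (hP1 : ∀ M N : Fin 1 → ι, P 1 M N = if M 0 = N 0 then (1 : ℝ) else 0)
    (hPidem : ∀ m, 2 ≤ m → m ≤ k + 2 → ∀ M N : Fin m → ι,
      ∑ Q : Fin m → ι, P m M Q * P m Q N = P m M N)
    (hPE : ∀ m, 2 ≤ m → m ≤ k + 2 → ∀ M : Fin m → ι,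
      nest bb E m M = ∑ N : Fin m → ι, P m M N • nest bb E m N)
    (hPF : ∀ m, 2 ≤ m → m ≤ k + 2 → ∀ N : Fin m → ι,
      nest bb F m N = ∑ M : Fin m → ι, P m M N • nest bb F m M)
    (hPnest : ∀ m : ℕ, 2 ≤ m + 1 → m + 1 ≤ k + 2 → ∀ M N : Fin (m + 1) → ι,
      P (m + 1) M N = ∑ A : Fin m → ι, ∑ B : Fin m → ι,
        P m (Fin.tail M) A * P (m + 1) (Fin.cons (M 0) A) (Fin.cons (N 0) B) *
          P m B (Fin.tail N))
    (a : ℕ → ℝ)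
    (ha1 : a 1 = 1)
    (hane : ∀ m, 1 ≤ m → m ≤ k + 2 → a m ≠ 0)
    (haP : ∀ m, 2 ≤ m → m ≤ k + 2 → ∀ M N : Fin m → ι,
      form (nest bb E m M) (nest bb F m N) = a m * P m M N) :
    ∀ (N : Fin (k + 2) → ι) (M : Fin (k + 3) → ι),
      (a (k + 2))⁻¹ • bb (nest bb F (k + 2) N) (nest bb E (k + 3) M)
        = -(∑ Q : Fin (k + 2) → ι, P (k + 2) Q N •
              ((if M 0 = Q 0 then (1 : ℝ) else 0) •
                ((a (k + 1))⁻¹ •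
                  bb (nest bb F (k + 1) (Fin.tail Q)) (nest bb E (k + 2) (Fin.tail M)))))
          - (a (k + 2))⁻¹ •
              bb (E (M 0)) (bb (nest bb E (k + 2) (Fin.tail M)) (nest bb F (k + 2) N)) :=
  Y_recursion_general U bb form hgrade hanti hjac hforminv E F hE hF hEF hspanF k P hP1 hPidem hPF
    hPnest a ha1 hane haP
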